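/- arXiv:2601.03008 — 6 statements merged into one kernel-verified Lean document; each statement's English description precedes it below -/
import Mathlib

section
/- Let X be a real symmetric positive semidefinite p×p matrix. Then rank(X) ≤ 1 if and only if trace(X) equals the largest eigenvalue of X. (For positive semidefinite X, the trace equals the nuclear norm ‖X‖_* and the largest eigenvalue equals the spectral norm ‖X‖, so this states that the DC constraint ‖X‖_* − ‖X‖ = 0 characterizes the rank-one constraint on the positive semidefinite cone.) -/
open Matrix

/-! The trace of a positive semidefinite matrix is the sum of its eigenvalues, which are
nonnegative, and its rank is the number of nonzero eigenvalues. A finite sum of nonnegative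
numbers equals its largest term exactly when all the other terms vanish. -/

section NonnegFamily

variable {ι M : Type*} [Fintype ι]

theorem Fintype.sum_eq_iff_forall_ne_eq_zero_of_nonneg [AddCommMonoid M] [PartialOrder M]
    [IsOrderedCancelAddMonoid M] {f : ι → M} (hf : 0 ≤ f) (j : ι) :
    ∑ i, f i = f j ↔ ∀ i ≠ j, f i = 0 := by
  classical
  rw [← Finset.add_sum_erase _ _ (Finset.mem_univ j), add_eq_left,
    Finset.sum_eq_zero_iff_of_nonneg fun i _ ↦ hf i]
  simp

theorem card_ne_zero_le_one_iff_forall_ne_eq_zero [Zero M] [PartialOrder M] [DecidableEq M]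
    {f : ι → M} (hf : 0 ≤ f) {j : ι} (hj : ∀ i, f i ≤ f j) :
    Fintype.card {i // f i ≠ 0} ≤ 1 ↔ ∀ i ≠ j, f i = 0 := by
  rw [Fintype.card_le_one_iff]
  constructor
  · intro h i hij
    by_contra hi
    have hj0 : f j ≠ 0 := ((hf i).lt_of_ne' hi |>.trans_le (hj i)).ne'
    exact hij (congrArg Subtype.val (h ⟨i, hi⟩ ⟨j, hj0⟩))
  · rintro h ⟨a, ha⟩ ⟨b, hb⟩
    have eq_j : ∀ i, f i ≠ 0 → i = j := fun i hi ↦ by_contra fun hij ↦ hi (h i hij)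
    exact Subtype.ext ((eq_j a ha).trans (eq_j b hb).symm)

theorem card_ne_zero_le_one_iff_sum_eq_iSup {f : ι → ℝ} (hf : 0 ≤ f) :
    Fintype.card {i // f i ≠ 0} ≤ 1 ↔ ∑ i, f i = ⨆ i, f i := by
  cases isEmpty_or_nonempty ι
  · simp
  obtain ⟨j, hj⟩ := Finite.exists_max f
  have hsup : ⨆ i, f i = f j := le_antisymm (ciSup_le hj) (le_ciSup (Finite.bddAbove_range f) j)
  rw [hsup, card_ne_zero_le_one_iff_forall_ne_eq_zero hf hj,
    Fintype.sum_eq_iff_forall_ne_eq_zero_of_nonneg hf]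

end NonnegFamily

theorem rank_le_one_iff_trace_eq_top_eigenvalue_general (p : ℕ)
    (X : Matrix (Fin p) (Fin p) ℝ) (hX : X.PosSemidef) :
    X.rank ≤ 1 ↔ X.trace = ⨆ i, hX.1.eigenvalues i := by
  rw [hX.1.rank_eq_card_non_zero_eigs, hX.1.trace_eq_sum_eigenvalues]
  exact card_ne_zero_le_one_iff_sum_eq_iSup hX.eigenvalues_nonneg

/-- For a real symmetric positive semidefinite matrix `X`, one has
`rank(X) ≤ 1` if and only if `trace(X)` equals the largest eigenvalue of `X`
(i.e. the DC constraint `‖X‖_* − ‖X‖ = 0` characterizes the rank-one constraint on the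
PSD cone, since for PSD matrices the trace is the nuclear norm and the largest
eigenvalue is the spectral norm). -/
theorem rank_le_one_iff_trace_eq_top_eigenvalue (p : ℕ) (hp : 0 < p)
    (X : Matrix (Fin p) (Fin p) ℝ) (hX : X.PosSemidef) :
    X.rank ≤ 1 ↔ X.trace = ⨆ i, hX.1.eigenvalues i :=
  rank_le_one_iff_trace_eq_top_eigenvalue_general p X hX
end

section
/- Let f : ℝ^r → ℝ, A ∈ ℝ^{r×n}, b ∈ ℝ^r, and p := n+1. For X ∈ ℝ^{p×p} written in block form X = [[x₁₁, z₂ᵀ],[z₃, Z]] with x₁₁ ∈ ℝ, z₂, z₃ ∈ ℝ^n, Z ∈ ℝ^{n×n}, define the linear map 𝒜(X) := (1/2)·A(z₂ + z₃). Let F be the set of real symmetric positive semidefinite p×p matrices X with rank(X) ≤ 1 and all diagonal entries equal to 1. Then the infimum of f(A x − b) over x ∈ {−1,1}^n equals the infimum of f(𝒜(X) − b) over X ∈ F, i.e., the binary problem and its lifted rank-one semidefinite reformulation have the same optimal value. -/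
/-!
A sign vector `x` lifts to the rank-one matrix `v vᵀ` with `v = (1, x)`. Conversely, all `2 × 2`
minors of a matrix of rank at most one vanish, so a symmetric one with unit diagonal has
`X₀ⱼ² = X₀₀ Xⱼⱼ = 1`; its first row is then a sign vector `x` with `𝒜(X) = A x`. Hence both
problems minimise `f` over the same set of points.
-/

open Matrix

theorem Matrix.mul_mul_eq_mul_mul_of_rank_le_one {K m n : Type*} [Field K] [Fintype n]
    {X : Matrix m n K} (hX : X.rank ≤ 1) (i k : m) (j l : n) :
    X i j * X k l = X i l * X k j := by
  have := FiniteDimensional.span_of_finite K (Set.finite_range X.col)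
  rw [rank_eq_finrank_span_cols, finrank_le_one_iff] at hX
  obtain ⟨v, hv⟩ := hX
  have hcol (j : n) : ∃ c : K, c • (v : m → K) = X.col j :=
    (hv ⟨_, Submodule.subset_span ⟨j, rfl⟩⟩).imp fun _ h => congrArg Subtype.val h
  obtain ⟨c, hc⟩ := hcol j
  obtain ⟨d, hd⟩ := hcol l
  change X.col j i * X.col l k = X.col l i * X.col j k
  rw [← hc, ← hd]
  simp only [Pi.smul_apply, smul_eq_mul]
  ring

theorem Matrix.IsSymm.eq_one_or_eq_neg_one_of_rank_le_one {K n : Type*} [Field K] [Fintype n]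
    {X : Matrix n n K} (hsymm : X.IsSymm) (hX : X.rank ≤ 1) (hdiag : ∀ i, X i i = 1) (i j : n) :
    X i j = 1 ∨ X i j = -1 := by
  rw [← mul_self_eq_one_iff]
  calc X i j * X i j = X i j * X j i := by rw [hsymm.apply i j]
    _ = X i i * X j j := mul_mul_eq_mul_mul_of_rank_le_one hX i j j i
    _ = 1 := by rw [hdiag, hdiag, one_mul]

theorem Matrix.inv_two_smul_mulVec_add_self {K m n : Type*} [Field K] [NeZero (2 : K)] [Fintype n]
    (A : Matrix m n K) (x : n → K) : (2 : K)⁻¹ • (A *ᵥ (x + x)) = A *ᵥ x := by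
  rw [← two_smul K x, mulVec_smul, smul_smul, inv_mul_cancel₀ two_ne_zero, one_smul]

theorem exists_rank_one_lift_of_sign_vector {n : ℕ} {x : Fin n → ℝ}
    (hx : ∀ i, x i = 1 ∨ x i = -1) :
    ∃ X : Matrix (Fin (n + 1)) (Fin (n + 1)) ℝ, X.PosSemidef ∧ X.rank ≤ 1 ∧ (∀ i, X i i = 1) ∧
      (fun j : Fin n => X 0 j.succ + X j.succ 0) = x + x := by
  set v : Fin (n + 1) → ℝ := Fin.cons 1 x
  refine ⟨vecMulVec v v, by simpa using posSemidef_vecMulVec_self_star v, rank_vecMulVec_le v v,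
    fun i => ?_, funext fun j => by simp [v, vecMulVec_apply]⟩
  rw [vecMulVec_apply, mul_self_eq_one_iff]
  cases i using Fin.cases with
  | zero => simp [v]
  | succ j => simpa [v] using hx j

/-- The binary problem `min_{x ∈ {−1,1}^n} f(Ax − b)` and its lifted rank-one
semidefinite reformulation `min {f(𝒜(X) − b) : X ⪰ 0, rank X ≤ 1, diag X = e}` (with `p = n+1`
and `𝒜(X) = (1/2)·A(z₂ + z₃)` in the block notation of the paper) have the same optimal value. -/
theorem lifted_rank_one_sdp_same_value (n r : ℕ) (f : (Fin r → ℝ) → ℝ)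
    (A : Matrix (Fin r) (Fin n) ℝ) (b : Fin r → ℝ) :
    sInf {c : ℝ | ∃ x : Fin n → ℝ, (∀ i, x i = 1 ∨ x i = -1) ∧ c = f (A *ᵥ x - b)} =
    sInf {c : ℝ | ∃ X : Matrix (Fin (n + 1)) (Fin (n + 1)) ℝ,
      X.PosSemidef ∧ X.rank ≤ 1 ∧ (∀ i, X i i = 1) ∧
      c = f ((2 : ℝ)⁻¹ • (A *ᵥ fun j : Fin n => X 0 j.succ + X j.succ 0) - b)} := by
  congr 1
  ext c
  constructor
  · rintro ⟨x, hx, rfl⟩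
    obtain ⟨X, hpsd, hrank, hdiag, hlift⟩ := exists_rank_one_lift_of_sign_vector hx
    exact ⟨X, hpsd, hrank, hdiag, by rw [hlift, inv_two_smul_mulVec_add_self]⟩
  · rintro ⟨X, hpsd, hrank, hdiag, rfl⟩
    have hsymm : X.IsSymm := isHermitian_iff_isSymm.mp hpsd.isHermitian
    have hrow : (fun j : Fin n => X 0 j.succ + X j.succ 0) =
        (fun j => X 0 j.succ) + fun j => X 0 j.succ := funext fun j => by simp [hsymm.apply]
    refine ⟨fun j => X 0 j.succ,
      fun j => hsymm.eq_one_or_eq_neg_one_of_rank_le_one hrank hdiag 0 j.succ, ?_⟩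
    rw [hrow, inv_two_smul_mulVec_add_self]
end

section
/- Let V ∈ ℝ^{m×p} and let u₁ be a unit eigenvector of VᵀV associated with its largest eigenvalue. Then for every V' ∈ ℝ^{m×p}, ‖V'‖² ≥ ‖V‖² + 2⟨V u₁ u₁ᵀ, V' − V⟩, where ‖·‖ is the spectral norm and ⟨A,B⟩ = tr(AᵀB). Equivalently, Γ := −2 V u₁ u₁ᵀ satisfies the supergradient (concavity-majorization) inequality −‖V'ᵀV'‖ ≤ −‖VᵀV‖ + ⟨Γ, V' − V⟩ for all V'. -/
open Matrix

noncomputable section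

/-- Squared Frobenius norm `‖A‖_F²`. -/
def frobSq {a b : ℕ} (A : Matrix (Fin a) (Fin b) ℝ) : ℝ := ∑ i, ∑ j, A i j ^ 2

/-- Frobenius norm `‖A‖_F`. -/
def frobNorm {a b : ℕ} (A : Matrix (Fin a) (Fin b) ℝ) : ℝ := Real.sqrt (frobSq A)

/-- Trace (Frobenius) inner product `⟨A,B⟩ = tr(AᵀB)`. -/
def frobInner {a b : ℕ} (A B : Matrix (Fin a) (Fin b) ℝ) : ℝ := ∑ i, ∑ j, A i j * B i j

/-- Squared spectral norm: `sup {‖Vx‖₂² : ‖x‖₂ = 1}`. -/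
def specSq {a b : ℕ} (V : Matrix (Fin a) (Fin b) ℝ) : ℝ :=
  sSup {c | ∃ x : Fin b → ℝ, (∑ j, x j ^ 2) = 1 ∧ c = ∑ i, (∑ j, V i j * x j) ^ 2}

/-- Spectral norm (largest singular value). -/
def specNorm {a b : ℕ} (V : Matrix (Fin a) (Fin b) ℝ) : ℝ := Real.sqrt (specSq V)

/-- Membership in `S`: all columns have unit Euclidean norm. -/
def unitCols {a b : ℕ} (V : Matrix (Fin a) (Fin b) ℝ) : Prop :=
  ∀ j, ∑ i, V i j ^ 2 = 1

/-- Column-wise normalization to unit Euclidean norm (projection onto `S`). -/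
def normalizeCols {a b : ℕ} (G : Matrix (Fin a) (Fin b) ℝ) : Matrix (Fin a) (Fin b) ℝ :=
  Matrix.of fun i j => G i j / Real.sqrt (∑ i', G i' j ^ 2)

/-- `u` is a unit eigenvector of `VᵀV` associated with its largest eigenvalue `lam`
(the Rayleigh-quotient bound states that `lam` is the largest eigenvalue). -/
def isTopEigen {a b : ℕ} (V : Matrix (Fin a) (Fin b) ℝ) (lam : ℝ) (u : Fin b → ℝ) : Prop :=
  (∑ j, u j ^ 2) = 1 ∧ (Vᵀ * V) *ᵥ u = lam • u ∧
    ∀ x : Fin b → ℝ, x ⬝ᵥ ((Vᵀ * V) *ᵥ x) ≤ lam * (x ⬝ᵥ x)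

/-- `Γ(V) = −2 V u uᵀ` where `u = u₁(V)`. -/
def GammaOf {a b : ℕ} (V : Matrix (Fin a) (Fin b) ℝ) (u : Fin b → ℝ) :
    Matrix (Fin a) (Fin b) ℝ := (-2 : ℝ) • (V * vecMulVec u u)

/-- The update direction `G(V) = (2ρ+L)⁻¹ (L V − ∇f̃(V) − ρ Γ(V))`. -/
def Gmap {a b : ℕ} (gradf : Matrix (Fin a) (Fin b) ℝ → Matrix (Fin a) (Fin b) ℝ)
    (ρ L : ℝ) (V : Matrix (Fin a) (Fin b) ℝ) (u : Fin b → ℝ) : Matrix (Fin a) (Fin b) ℝ :=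
  (2 * ρ + L)⁻¹ • (L • V - gradf V - ρ • GammaOf V u)

/-- Penalized objective `Φ_ρ(V) = f̃(V) + ρ(‖V‖_F² − ‖V‖²)`. -/
def Phi {a b : ℕ} (f : Matrix (Fin a) (Fin b) ℝ → ℝ) (ρ : ℝ)
    (V : Matrix (Fin a) (Fin b) ℝ) : ℝ := f V + ρ * (frobSq V - specSq V)

/-- Stationarity residual `𝒢_ρ(V,Γ) = inf_t ‖∇f̃(V) + 2ρV + ρΓ + V·Diag(t)‖_F`. -/
def Gres {a b : ℕ} (gradf : Matrix (Fin a) (Fin b) ℝ → Matrix (Fin a) (Fin b) ℝ) (ρ : ℝ)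
    (V Γ : Matrix (Fin a) (Fin b) ℝ) : ℝ :=
  ⨅ t : Fin b → ℝ, frobNorm (gradf V + (2 * ρ) • V + ρ • Γ + V * Matrix.diagonal t)

/-- The all-ones matrix `E` scaled by `1/√m`. -/
def Escaled (a b : ℕ) : Matrix (Fin a) (Fin b) ℝ :=
  (Real.sqrt a)⁻¹ • Matrix.of fun _ _ => (1 : ℝ)

/-! The spectral norm is the supremum of `‖Vx‖²` over unit vectors `x`, so it dominates
`‖V'u‖²`, and at the top eigenvector `u` of `VᵀV` it is attained: `‖V‖² = ‖Vu‖²`.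
Since `⟨V u uᵀ, V' − V⟩ = ⟨Vu, V'u − Vu⟩`, the claim reduces to the convexity of
`w ↦ ‖w‖²` at `w = Vu`, i.e. to `‖V'u − Vu‖² ≥ 0`. -/

lemma sum_sq_sum_mul_eq_dotProduct {a b : ℕ} (A : Matrix (Fin a) (Fin b) ℝ) (x : Fin b → ℝ) :
    ∑ i, (∑ j, A i j * x j) ^ 2 = (A *ᵥ x) ⬝ᵥ (A *ᵥ x) := by
  simp only [dotProduct, mulVec, sq]

lemma dotProduct_transpose_mul_mulVec {m n R : Type*} [Fintype m] [Fintype n] [CommSemiring R]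
    (A : Matrix m n R) (x : n → R) : x ⬝ᵥ ((Aᵀ * A) *ᵥ x) = (A *ᵥ x) ⬝ᵥ (A *ᵥ x) := by
  rw [← mulVec_mulVec, dotProduct_mulVec, vecMul_transpose]

lemma dotProduct_self_eq_sum_sq {n R : Type*} [Fintype n] [CommSemiring R] (x : n → R) : x ⬝ᵥ x = ∑ j, x j ^ 2 := by
  simp only [dotProduct, sq]

lemma bddAbove_specSq_set {a b : ℕ} (A : Matrix (Fin a) (Fin b) ℝ) :
    BddAbove {c | ∃ x : Fin b → ℝ, (∑ j, x j ^ 2) = 1 ∧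
      c = ∑ i, (∑ j, A i j * x j) ^ 2} := by
  refine ⟨frobSq A, ?_⟩
  rintro c ⟨x, hx, rfl⟩
  refine Finset.sum_le_sum fun i _ => ?_
  simpa [hx] using Finset.sum_mul_sq_le_sq_mul_sq Finset.univ (A i) x

lemma dotProduct_mulVec_self_le_specSq {a b : ℕ} (A : Matrix (Fin a) (Fin b) ℝ)
    {x : Fin b → ℝ} (hx : ∑ j, x j ^ 2 = 1) : (A *ᵥ x) ⬝ᵥ (A *ᵥ x) ≤ specSq A := by
  rw [← sum_sq_sum_mul_eq_dotProduct]
  exact le_csSup (bddAbove_specSq_set A) ⟨x, hx, rfl⟩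

namespace isTopEigen

variable {a b : ℕ} {V : Matrix (Fin a) (Fin b) ℝ} {lam : ℝ} {u : Fin b → ℝ}

lemma eq_dotProduct_mulVec_self (h : isTopEigen V lam u) :
    lam = (V *ᵥ u) ⬝ᵥ (V *ᵥ u) := by
  obtain ⟨hu, heig, -⟩ := h
  rw [← dotProduct_transpose_mul_mulVec, heig, dotProduct_smul, dotProduct_self_eq_sum_sq,
    hu, smul_eq_mul, mul_one]

lemma specSq_eq (h : isTopEigen V lam u) : specSq V = lam := by
  refine le_antisymm ?_ (h.eq_dotProduct_mulVec_self ▸ dotProduct_mulVec_self_le_specSq V h.1)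
  refine csSup_le ⟨_, u, h.1, rfl⟩ ?_
  rintro c ⟨x, hx, rfl⟩
  calc ∑ i, (∑ j, V i j * x j) ^ 2 = x ⬝ᵥ ((Vᵀ * V) *ᵥ x) := by
        rw [sum_sq_sum_mul_eq_dotProduct, dotProduct_transpose_mul_mulVec]
    _ ≤ lam * (x ⬝ᵥ x) := h.2.2 x
    _ = lam := by rw [dotProduct_self_eq_sum_sq, hx, mul_one]

end isTopEigen

lemma frobInner_mul_vecMulVec {a b : ℕ} (A B : Matrix (Fin a) (Fin b) ℝ) (u v : Fin b → ℝ) :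
    frobInner (A * vecMulVec u v) B = (A *ᵥ u) ⬝ᵥ (B *ᵥ v) := by
  simp only [frobInner, dotProduct, mulVec, mul_apply, vecMulVec_apply, Finset.mul_sum,
    Finset.sum_mul]
  refine Finset.sum_congr rfl fun i _ =>
    Finset.sum_congr rfl fun j _ => Finset.sum_congr rfl fun k _ => by ring

lemma frobInner_smul_left {a b : ℕ} (c : ℝ) (A B : Matrix (Fin a) (Fin b) ℝ) :
    frobInner (c • A) B = c * frobInner A B := by
  simp only [frobInner, Matrix.smul_apply, smul_eq_mul, Finset.mul_sum, mul_assoc]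

lemma dotProduct_self_add_two_mul_le {n : Type*} [Fintype n] (w w' : n → ℝ) :
    w ⬝ᵥ w + 2 * (w ⬝ᵥ (w' - w)) ≤ w' ⬝ᵥ w' := by
  have h := dotProduct_self_star_nonneg (w' - w)
  simp only [star_trivial, sub_dotProduct, dotProduct_sub, dotProduct_comm w w'] at h ⊢
  linarith

/-- If `u₁` is a unit eigenvector of `VᵀV` for its largest eigenvalue, then
for all `V'`, `‖V'‖² ≥ ‖V‖² + 2⟨V u₁ u₁ᵀ, V' − V⟩`; equivalently `Γ = −2Vu₁u₁ᵀ` is a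
supergradient: `−‖V'ᵀV'‖ ≤ −‖VᵀV‖ + ⟨Γ, V' − V⟩`. -/
theorem spectral_sq_supergradient (m p : ℕ) (V : Matrix (Fin m) (Fin p) ℝ)
    (lam : ℝ) (u : Fin p → ℝ) (htop : isTopEigen V lam u) :
    ∀ V' : Matrix (Fin m) (Fin p) ℝ,
      specSq V' ≥ specSq V + 2 * frobInner (V * vecMulVec u u) (V' - V) ∧
      -(specSq V') ≤ -(specSq V) + frobInner (GammaOf V u) (V' - V) := by
  intro V'
  have hV : specSq V = (V *ᵥ u) ⬝ᵥ (V *ᵥ u) :=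
    htop.specSq_eq.trans htop.eq_dotProduct_mulVec_self
  have hV' := dotProduct_mulVec_self_le_specSq V' htop.1
  have hinner : frobInner (V * vecMulVec u u) (V' - V) = (V *ᵥ u) ⬝ᵥ (V' *ᵥ u - V *ᵥ u) := by
    rw [frobInner_mul_vecMulVec, sub_mulVec]
  have hconv := dotProduct_self_add_two_mul_le (V *ᵥ u) (V' *ᵥ u)
  have hmain : specSq V' ≥ specSq V + 2 * frobInner (V * vecMulVec u u) (V' - V) := by
    rw [hV, hinner]
    linarith
  refine ⟨hmain, ?_⟩
  rw [GammaOf, frobInner_smul_left]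
  linarith

end
end

section
/- (Proposition 1(iii), residual bound.) Let V ∈ S with every column of G(V) nonzero and let V⁺ := Proj_S(G(V)) be the algorithmic update. Then there exists t ∈ ℝ^p such that ‖∇f̃(V⁺) + 2ρV⁺ + ρΓ(V) + V⁺·Diag(t)‖_F ≤ (L + L_f̃)·‖V⁺ − V‖_F; consequently the stationarity residual satisfies 𝒢_ρ(V⁺, Γ(V)) ≤ (L + L_f̃)·‖V⁺ − V‖_F. -/
open Matrix

noncomputable section

attribute [local instance] Matrix.frobeniusNormedAddCommGroup Matrix.frobeniusNormedSpace

/-- The continuous linear functional `W ↦ ⟨A, W⟩` (Frobenius pairing); used to state that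
`∇f̃` is the gradient of `f̃` with respect to the trace inner product. -/
def frobCLM {a b : ℕ} (A : Matrix (Fin a) (Fin b) ℝ) :
    Matrix (Fin a) (Fin b) ℝ →L[ℝ] ℝ :=
  LinearMap.toContinuousLinearMap
    { toFun := fun W => frobInner A W
      map_add' := fun W W' => by
        simp [frobInner, Matrix.add_apply, mul_add, Finset.sum_add_distrib]
      map_smul' := fun c W => by
        simp [frobInner, Matrix.smul_apply, smul_eq_mul, Finset.mul_sum, mul_left_comm] }

/-! Column normalization gives `V⁺ · Diag(‖G_j‖) = G(V)`, so with the multipliers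
`t_j = (2ρ + L)(‖G_j‖ - 1)` the residual at `V⁺` collapses exactly to
`∇f̃(V⁺) - ∇f̃(V) - L (V⁺ - V)`, which the Lipschitz bound on `∇f̃` controls. -/

lemma frobNorm_eq_norm {a b : ℕ} (A : Matrix (Fin a) (Fin b) ℝ) : frobNorm A = ‖A‖ := by
  rw [Matrix.frobenius_norm_def, frobNorm, frobSq, Real.sqrt_eq_rpow]
  congr 1
  refine Finset.sum_congr rfl fun i _ => Finset.sum_congr rfl fun j _ => ?_
  simp [Real.norm_eq_abs, sq_abs]

lemma frobNorm_sub_smul_le {a b : ℕ} {A D : Matrix (Fin a) (Fin b) ℝ} {K L : ℝ}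
    (hA : frobNorm A ≤ K * frobNorm D) (hL : 0 ≤ L) :
    frobNorm (A - L • D) ≤ (L + K) * frobNorm D := by
  simp only [frobNorm_eq_norm] at hA ⊢
  calc ‖A - L • D‖ ≤ ‖A‖ + ‖L • D‖ := norm_sub_le _ _
    _ = ‖A‖ + L * ‖D‖ := by rw [norm_smul, Real.norm_of_nonneg hL]
    _ ≤ (L + K) * ‖D‖ := by linarith

lemma Gres_le {a b : ℕ} (gradf : Matrix (Fin a) (Fin b) ℝ → Matrix (Fin a) (Fin b) ℝ)
    (ρ : ℝ) (V Γ : Matrix (Fin a) (Fin b) ℝ) (t : Fin b → ℝ) :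
    Gres gradf ρ V Γ ≤ frobNorm (gradf V + (2 * ρ) • V + ρ • Γ + V * diagonal t) :=
  ciInf_le ⟨0, by rintro _ ⟨t', rfl⟩; exact Real.sqrt_nonneg _⟩ t

def colNorm {a b : ℕ} (G : Matrix (Fin a) (Fin b) ℝ) (j : Fin b) : ℝ :=
  √(∑ i, G i j ^ 2)

lemma colNorm_ne_zero {a b : ℕ} {G : Matrix (Fin a) (Fin b) ℝ} {j : Fin b}
    (h : ∃ i, G i j ≠ 0) : colNorm G j ≠ 0 := by
  obtain ⟨i, hi⟩ := h
  refine (Real.sqrt_pos.mpr ?_).ne'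
  exact Finset.sum_pos' (fun _ _ => sq_nonneg _) ⟨i, Finset.mem_univ i, by positivity⟩

lemma normalizeCols_mul_diagonal_colNorm {a b : ℕ} {G : Matrix (Fin a) (Fin b) ℝ}
    (hG : ∀ j, colNorm G j ≠ 0) : normalizeCols G * diagonal (colNorm G) = G := by
  ext i j
  simp only [mul_diagonal, normalizeCols, of_apply]
  exact div_mul_cancel₀ _ (hG j)

lemma smul_Gmap {a b : ℕ} (gradf : Matrix (Fin a) (Fin b) ℝ → Matrix (Fin a) (Fin b) ℝ)
    {ρ L : ℝ} (V : Matrix (Fin a) (Fin b) ℝ) (u : Fin b → ℝ) (hc : 2 * ρ + L ≠ 0) :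
    (2 * ρ + L) • Gmap gradf ρ L V u = L • V - gradf V - ρ • GammaOf V u := by
  rw [Gmap, smul_smul, mul_inv_cancel₀ hc, one_smul]

lemma residual_eq_of_smul_eq {a b : ℕ}
    {gradf : Matrix (Fin a) (Fin b) ℝ → Matrix (Fin a) (Fin b) ℝ} {ρ L : ℝ}
    {V Γ G : Matrix (Fin a) (Fin b) ℝ}
    (hG : (2 * ρ + L) • G = L • V - gradf V - ρ • Γ) (hn : ∀ j, colNorm G j ≠ 0) :
    gradf (normalizeCols G) + (2 * ρ) • normalizeCols G + ρ • Γ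
        + normalizeCols G * diagonal (fun j => (2 * ρ + L) * (colNorm G j - 1))
      = (gradf (normalizeCols G) - gradf V) - L • (normalizeCols G - V) := by
  have hdiag : normalizeCols G * diagonal (fun j => (2 * ρ + L) * (colNorm G j - 1))
      = (2 * ρ + L) • (normalizeCols G * diagonal (colNorm G))
        - (2 * ρ + L) • normalizeCols G := by
    ext i j
    simp only [mul_diagonal, Matrix.sub_apply, Matrix.smul_apply, smul_eq_mul]
    ring
  rw [hdiag, normalizeCols_mul_diagonal_colNorm hn, hG]
  module

theorem dcra_residual_bound_general (m p : ℕ)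
    (gradf : Matrix (Fin m) (Fin p) ℝ → Matrix (Fin m) (Fin p) ℝ)
    (Lf : ℝ)
    (hlip : ∀ W W' : Matrix (Fin m) (Fin p) ℝ,
      frobNorm (gradf W - gradf W') ≤ Lf * frobNorm (W - W'))
    (ρ L : ℝ) (hρ : 0 < ρ) (hL : 0 < L)
    (V : Matrix (Fin m) (Fin p) ℝ)
    (u : Fin p → ℝ)
    (hcol : ∀ j, ∃ i, Gmap gradf ρ L V u i j ≠ 0)
    (Vp : Matrix (Fin m) (Fin p) ℝ) (hVp : Vp = normalizeCols (Gmap gradf ρ L V u)) :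
    (∃ t : Fin p → ℝ,
      frobNorm (gradf Vp + (2 * ρ) • Vp + ρ • GammaOf V u + Vp * Matrix.diagonal t)
        ≤ (L + Lf) * frobNorm (Vp - V)) ∧
    Gres gradf ρ Vp (GammaOf V u) ≤ (L + Lf) * frobNorm (Vp - V) := by
  subst hVp
  have hc : 2 * ρ + L ≠ 0 := by positivity
  have hresidual :=
    residual_eq_of_smul_eq (smul_Gmap gradf V u hc) fun j => colNorm_ne_zero (hcol j)
  have hbound := frobNorm_sub_smul_le (hlip (normalizeCols (Gmap gradf ρ L V u)) V) hL.le
  rw [← hresidual] at hbound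
  exact ⟨⟨_, hbound⟩, (Gres_le _ _ _ _ _).trans hbound⟩

/-- Proposition 1(iii), residual bound. For the algorithmic update
`V⁺ = Proj_S(G(V))` there exists `t ∈ ℝ^p` with
`‖∇f̃(V⁺) + 2ρV⁺ + ρΓ(V) + V⁺·Diag(t)‖_F ≤ (L + L_f̃)·‖V⁺ − V‖_F`; consequently the
stationarity residual satisfies `𝒢_ρ(V⁺, Γ(V)) ≤ (L + L_f̃)·‖V⁺ − V‖_F`. -/
theorem dcra_residual_bound (m p : ℕ)
    (ftilde : Matrix (Fin m) (Fin p) ℝ → ℝ)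
    (gradf : Matrix (Fin m) (Fin p) ℝ → Matrix (Fin m) (Fin p) ℝ)
    (Lf : ℝ) (hLf : 0 < Lf)
    (hderiv : ∀ W : Matrix (Fin m) (Fin p) ℝ, HasFDerivAt ftilde (frobCLM (gradf W)) W)
    (hlip : ∀ W W' : Matrix (Fin m) (Fin p) ℝ,
      frobNorm (gradf W - gradf W') ≤ Lf * frobNorm (W - W'))
    (ρ L : ℝ) (hρ : 0 < ρ) (hL : 0 < L)
    (V : Matrix (Fin m) (Fin p) ℝ) (hV : unitCols V)
    (u : Fin p → ℝ) (lam : ℝ) (htop : isTopEigen V lam u)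
    (hcol : ∀ j, ∃ i, Gmap gradf ρ L V u i j ≠ 0)
    (Vp : Matrix (Fin m) (Fin p) ℝ) (hVp : Vp = normalizeCols (Gmap gradf ρ L V u)) :
    (∃ t : Fin p → ℝ,
      frobNorm (gradf Vp + (2 * ρ) • Vp + ρ • GammaOf V u + Vp * Matrix.diagonal t)
        ≤ (L + Lf) * frobNorm (Vp - V)) ∧
    Gres gradf ρ Vp (GammaOf V u) ≤ (L + Lf) * frobNorm (Vp - V) :=
  dcra_residual_bound_general m p gradf Lf hlip ρ L hρ hL V u hcol Vp hVp

end
end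

section
/- Let p ≥ 1 and let u ∈ ℝ^p be a unit vector (‖u‖₂ = 1) such that |u_j| ≥ a for all j, where a ∈ [0,1]. Then the ℓ₁-norm of u satisfies Σ_{j=1}^p |u_j| ≥ a + 1 − 1/p. -/
open Matrix

noncomputable section

/- The entries of a unit vector satisfy `u_j² ≤ |u_j|`, so `Σ|u_j| - 1 = Σ (|u_j| - u_j²)` is at
least `|u_i| - u_i²` for every `i`. Choosing `i` with `u_i² ≤ 1/p`, which exists by averaging, gives
`Σ|u_j| ≥ 1 + a - 1/p`. -/

theorem sq_le_abs_of_sum_sq_le_one {ι : Type*} {s : Finset ι} {u : ι → ℝ}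
    (h : ∑ j ∈ s, u j ^ 2 ≤ 1) {i : ι} (hi : i ∈ s) : u i ^ 2 ≤ |u i| := by
  have hsq : u i ^ 2 ≤ 1 :=
    (Finset.single_le_sum (fun j _ => sq_nonneg (u j)) hi).trans h
  rw [← sq_abs]
  exact pow_le_of_le_one (abs_nonneg _) ((sq_le_one_iff_abs_le_one _).1 hsq) two_ne_zero

theorem abs_sub_sq_le_sum_abs_sub_sum_sq {ι : Type*} {s : Finset ι} {u : ι → ℝ}
    (h : ∑ j ∈ s, u j ^ 2 ≤ 1) {i : ι} (hi : i ∈ s) :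
    |u i| - u i ^ 2 ≤ ∑ j ∈ s, |u j| - ∑ j ∈ s, u j ^ 2 := by
  rw [← Finset.sum_sub_distrib]
  exact Finset.single_le_sum (f := fun j => |u j| - u j ^ 2)
    (fun j hj => sub_nonneg.2 (sq_le_abs_of_sum_sq_le_one h hj)) hi

theorem exists_sq_le_sum_sq_div_card {ι : Type*} [Fintype ι] [Nonempty ι] (u : ι → ℝ) :
    ∃ i, u i ^ 2 ≤ (∑ j, u j ^ 2) / Fintype.card ι := by
  have hcard : (Fintype.card ι : ℝ) ≠ 0 := Nat.cast_ne_zero.2 Fintype.card_ne_zero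
  have hsum : ∑ j, u j ^ 2 ≤ ∑ _j : ι, (∑ j, u j ^ 2) / Fintype.card ι := by
    rw [Finset.sum_const, Finset.card_univ, nsmul_eq_mul, mul_div_cancel₀ _ hcard]
  obtain ⟨i, -, hi⟩ := Finset.exists_le_of_sum_le Finset.univ_nonempty hsum
  exact ⟨i, hi⟩

theorem l1_lower_bound_of_unit_vector_general (p : ℕ) (hp : 1 ≤ p) (u : Fin p → ℝ)
    (hunit : ∑ j, u j ^ 2 = 1) (a : ℝ)
    (hlb : ∀ j, a ≤ |u j|) :
    a + 1 - 1 / (p : ℝ) ≤ ∑ j, |u j| := by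
  have : Nonempty (Fin p) := ⟨⟨0, hp⟩⟩
  obtain ⟨i, hi⟩ := exists_sq_le_sum_sq_div_card u
  rw [hunit, Fintype.card_fin] at hi
  have hgap := abs_sub_sq_le_sum_abs_sub_sum_sq hunit.le (Finset.mem_univ i)
  rw [hunit] at hgap
  linarith [hlb i]

/-- If `u ∈ ℝ^p` is a unit vector whose entries all satisfy `|u_j| ≥ a` with
`a ∈ [0,1]`, then `Σ_j |u_j| ≥ a + 1 − 1/p`. -/
theorem l1_lower_bound_of_unit_vector (p : ℕ) (hp : 1 ≤ p) (u : Fin p → ℝ)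
    (hunit : ∑ j, u j ^ 2 = 1) (a : ℝ) (ha : a ∈ Set.Icc (0 : ℝ) 1)
    (hlb : ∀ j, a ≤ |u j|) :
    a + 1 - 1 / (p : ℝ) ≤ ∑ j, |u j| :=
  l1_lower_bound_of_unit_vector_general p hp u hunit a hlb

end
end

section
/- (Theorem 2, approximate feasibility of the rank-one projection.) Let V ∈ ℝ^{m×p} have all columns of unit Euclidean norm and suppose ‖V‖_F² − ‖V‖² ≤ ε for some ε > 0. Let P₁ be a unit eigenvector of VᵀV associated with its largest eigenvalue and set x := ‖V‖·P₁ ∈ ℝ^p. Then ‖x ∘ x − e‖₂ ≤ ε, i.e., (Σ_{j=1}^p (x_j² − 1)²)^{1/2} ≤ ε, where ∘ denotes the entrywise (Hadamard) product and e the all-ones vector. -/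
/-! Write `A = VᵀV` and `d_j = 1 - λ P₁ⱼ²`, so that `x_j² - 1 = -d_j` because `‖V‖² = λ`.
Unit columns give `A_jj = 1`, and `A ⪰ λ P₁P₁ᵀ` then gives `d_j ≥ 0`; moreover
`∑ d_j = p - λ = ‖V‖_F² - ‖V‖² ≤ ε`. The Euclidean norm of the nonnegative vector `d` is at
most its sum. -/

open Matrix

noncomputable section

section QuadraticForm

variable {m n : Type*} [Fintype m] [Fintype n]

theorem dotProduct_transpose_mul_self_mulVec {R : Type*} [CommSemiring R]
    (V : Matrix m n R) (y : n → R) :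
    y ⬝ᵥ ((Vᵀ * V) *ᵥ y) = ∑ i, (∑ j, V i j * y j) ^ 2 := by
  rw [← mulVec_mulVec, dotProduct_mulVec, vecMul_transpose]
  simp only [dotProduct, mulVec, sq]

/-- Splitting `y` along the unit eigenvector `u` leaves a remainder on which the form is
nonnegative. -/
theorem Matrix.PosSemidef.mul_sq_dotProduct_le {A : Matrix n n ℝ} (hA : A.PosSemidef) {lam : ℝ}
    {u : n → ℝ} (hu : u ⬝ᵥ u = 1) (heig : A *ᵥ u = lam • u) (y : n → ℝ) :
    lam * (u ⬝ᵥ y) ^ 2 ≤ y ⬝ᵥ (A *ᵥ y) := by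
  have hsymm : Aᵀ = A := by
    simpa only [conjTranspose_eq_transpose_of_trivial] using hA.isHermitian.eq
  have hu_left : ∀ z, u ⬝ᵥ (A *ᵥ z) = lam * (u ⬝ᵥ z) := fun z => by
    rw [dotProduct_mulVec, ← hsymm, vecMul_transpose, heig, smul_dotProduct, smul_eq_mul]
  have hrest := hA.dotProduct_mulVec_nonneg (y - (u ⬝ᵥ y) • u)
  rw [star_trivial, mulVec_sub, mulVec_smul, heig] at hrest
  simp only [dotProduct_sub, sub_dotProduct, dotProduct_smul, smul_dotProduct, smul_eq_mul,
    hu_left, dotProduct_comm y u, hu] at hrest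
  nlinarith

end QuadraticForm

section TopEigen

variable {a b : ℕ} {V : Matrix (Fin a) (Fin b) ℝ} {lam : ℝ} {u : Fin b → ℝ}

theorem frobSq_eq_of_unitCols (hV : unitCols V) : frobSq V = b := by
  rw [frobSq, Finset.sum_comm, Finset.sum_congr rfl fun j _ => hV j]
  simp

theorem transpose_mul_self_apply_diag_of_unitCols (hV : unitCols V) (j : Fin b) :
    (Vᵀ * V) j j = 1 := by
  simpa only [mul_apply, transpose_apply, sq] using hV j

theorem isTopEigen.dotProduct_self (h : isTopEigen V lam u) : u ⬝ᵥ u = 1 := by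
  simpa only [dotProduct, sq] using h.1

theorem isTopEigen.rayleigh_eq (h : isTopEigen V lam u) : u ⬝ᵥ ((Vᵀ * V) *ᵥ u) = lam := by
  rw [h.2.1, dotProduct_smul, h.dotProduct_self, smul_eq_mul, mul_one]

theorem isTopEigen.nonneg (h : isTopEigen V lam u) : 0 ≤ lam := by
  rw [← h.rayleigh_eq, dotProduct_transpose_mul_self_mulVec]
  positivity

theorem isTopEigen.specSq_eq_s15 (h : isTopEigen V lam u) : specSq V = lam := by
  have hmem : lam ∈ {c | ∃ x : Fin b → ℝ, (∑ j, x j ^ 2) = 1 ∧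
      c = ∑ i, (∑ j, V i j * x j) ^ 2} :=
    ⟨u, h.1, by rw [← dotProduct_transpose_mul_self_mulVec, h.rayleigh_eq]⟩
  have hbound : ∀ c ∈ {c | ∃ x : Fin b → ℝ, (∑ j, x j ^ 2) = 1 ∧
      c = ∑ i, (∑ j, V i j * x j) ^ 2}, c ≤ lam := by
    rintro c ⟨y, hy, rfl⟩
    have hyy : y ⬝ᵥ y = 1 := by simpa only [dotProduct, sq] using hy
    simpa only [← dotProduct_transpose_mul_self_mulVec, hyy, mul_one] using h.2.2 y
  exact IsGreatest.csSup_eq ⟨hmem, hbound⟩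

theorem isTopEigen.specNorm_sq (h : isTopEigen V lam u) : specNorm V ^ 2 = lam := by
  rw [specNorm, Real.sq_sqrt (h.specSq_eq_s15 ▸ h.nonneg), h.specSq_eq_s15]

theorem isTopEigen.mul_sq_le_one (hV : unitCols V) (h : isTopEigen V lam u) (j : Fin b) :
    lam * u j ^ 2 ≤ 1 := by
  have hPSD : (Vᵀ * V).PosSemidef := by
    simpa only [conjTranspose_eq_transpose_of_trivial] using posSemidef_conjTranspose_mul_self V
  have := hPSD.mul_sq_dotProduct_le h.dotProduct_self h.2.1 (Pi.single j 1)
  simpa [mulVec_single, transpose_mul_self_apply_diag_of_unitCols hV j] using this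

end TopEigen

theorem Real.sqrt_sum_sq_le_sum {ι : Type*} (s : Finset ι) {f : ι → ℝ}
    (hf : ∀ i ∈ s, 0 ≤ f i) : Real.sqrt (∑ i ∈ s, f i ^ 2) ≤ ∑ i ∈ s, f i :=
  (Real.sqrt_le_left (Finset.sum_nonneg hf)).mpr (Finset.sum_sq_le_sq_sum_of_nonneg hf)

theorem rank_one_projection_approx_feasible_general (m p : ℕ)
    (V : Matrix (Fin m) (Fin p) ℝ) (hV : unitCols V)
    (ε : ℝ) (hgap : frobSq V - specSq V ≤ ε)
    (lam : ℝ) (P1 : Fin p → ℝ) (htop : isTopEigen V lam P1)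
    (x : Fin p → ℝ) (hx : x = specNorm V • P1) :
    Real.sqrt (∑ j, (x j ^ 2 - 1) ^ 2) ≤ ε := by
  have hdeficit_nonneg : ∀ j ∈ Finset.univ, 0 ≤ 1 - lam * P1 j ^ 2 := fun j _ =>
    sub_nonneg.mpr (htop.mul_sq_le_one hV j)
  have hdeficit_sum : ∑ j, (1 - lam * P1 j ^ 2) = frobSq V - specSq V := by
    rw [Finset.sum_sub_distrib, ← Finset.mul_sum, htop.1, frobSq_eq_of_unitCols hV,
      htop.specSq_eq_s15]
    simp
  have hentry : ∀ j, (x j ^ 2 - 1) ^ 2 = (1 - lam * P1 j ^ 2) ^ 2 := fun j => by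
    rw [hx, Pi.smul_apply, smul_eq_mul, mul_pow, htop.specNorm_sq]
    ring
  calc Real.sqrt (∑ j, (x j ^ 2 - 1) ^ 2) = Real.sqrt (∑ j, (1 - lam * P1 j ^ 2) ^ 2) := by
        simp only [hentry]
    _ ≤ ∑ j, (1 - lam * P1 j ^ 2) := Real.sqrt_sum_sq_le_sum _ hdeficit_nonneg
    _ ≤ ε := hdeficit_sum ▸ hgap

/-- Theorem 2, approximate feasibility. If `V` has unit columns and
`‖V‖_F² − ‖V‖² ≤ ε`, then the rank-one projection `x = ‖V‖·P₁` (with `P₁` a unit top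
eigenvector of `VᵀV`) satisfies `‖x ∘ x − e‖₂ ≤ ε`. -/
theorem rank_one_projection_approx_feasible (m p : ℕ)
    (V : Matrix (Fin m) (Fin p) ℝ) (hV : unitCols V)
    (ε : ℝ) (hε : 0 < ε) (hgap : frobSq V - specSq V ≤ ε)
    (lam : ℝ) (P1 : Fin p → ℝ) (htop : isTopEigen V lam P1)
    (x : Fin p → ℝ) (hx : x = specNorm V • P1) :
    Real.sqrt (∑ j, (x j ^ 2 - 1) ^ 2) ≤ ε :=
  rank_one_projection_approx_feasible_general m p V hV ε hgap lam P1 htop x hx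

end
end
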